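/- Let G be an extendable PDAG and e = u − v an undirected edge of G such that no Meek rule R1–R4 applies to orient e in the closure of G under the Meek rules, i.e. neither orientation of e is forced by the Meek-rule closure. Then there exist consistent extensions D₁, D₂ of G with u → v ∈ D₁ and v → u ∈ D₂ (completeness of the Meek rules). -/
import Mathlib


/-- A partially directed graph: arcs `A` and undirected edges `E`,
with at most one edge between any pair of vertices. -/
structure PDGraph (V : Type*) where
  A : V → V → Prop
  E : V → V → Prop
  E_symm : ∀ u v, E u v → E v u
  A_irrefl : ∀ v, ¬ A v v
  E_irrefl : ∀ v, ¬ E v v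
  no_two_cycle : ∀ u v, A u v → ¬ A v u
  not_both : ∀ u v, A u v → ¬ E u v

namespace PDGraph

variable {V : Type*}

/-- No directed cycle: a partially directed graph satisfying this is a PDAG. -/
def acyclic (G : PDGraph V) : Prop := ∀ v, ¬ Relation.TransGen G.A v v

/-- `u` and `v` are adjacent. -/
def adj (G : PDGraph V) (u v : V) : Prop := G.A u v ∨ G.A v u ∨ G.E u v

/-- `v` is a potential-sink: no children, and every sibling of `v` is
adjacent to all other neighbors of `v`. -/
def potentialSink (G : PDGraph V) (v : V) : Prop :=
  (∀ x, ¬ G.A v x) ∧ ∀ y, G.E y v → ∀ z, G.adj z v → z ≠ y → G.adj y z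

/-- A v-structure `u → m ← w` with `u`, `w` non-adjacent. -/
def vStructure (G : PDGraph V) (u m w : V) : Prop :=
  G.A u m ∧ G.A w m ∧ u ≠ w ∧ ¬ G.adj u w

/-- A DAG: acyclic with no undirected edges. -/
def isDAG (G : PDGraph V) : Prop := G.acyclic ∧ ∀ u v, ¬ G.E u v

/-- `D` is a consistent extension of `G`. -/
def consExt (D G : PDGraph V) : Prop :=
  D.isDAG ∧ (∀ u v, D.adj u v ↔ G.adj u v) ∧ (∀ u v, G.A u v → D.A u v) ∧
  (∀ u m w, D.vStructure u m w ↔ G.vStructure u m w)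

/-- `G` is extendable. -/
def extendable (G : PDGraph V) : Prop := ∃ D : PDGraph V, consExt D G

/-- Induced subgraph on a vertex set `S`. -/
def induce (G : PDGraph V) (S : Set V) : PDGraph S where
  A a b := G.A a b
  E a b := G.E a b
  E_symm := fun u v h => G.E_symm u v h
  A_irrefl := fun v => G.A_irrefl v
  E_irrefl := fun v => G.E_irrefl v
  no_two_cycle := fun u v h => G.no_two_cycle u v h
  not_both := fun u v h => G.not_both u v h

end PDGraph

open PDGraph

/-- `G'` is obtained from `G` by orienting the undirected edge `p − q` as
`p → q` (all other edges unchanged). -/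
def orients {V : Type*} (G G' : PDGraph V) (p q : V) : Prop :=
  G.E p q ∧ (∀ x y, G'.A x y ↔ G.A x y ∨ (x = p ∧ y = q)) ∧
  (∀ x y, G'.E x y ↔ G.E x y ∧ ¬(x = p ∧ y = q) ∧ ¬(x = q ∧ y = p))

/-- `G'` is obtained from `G` by a single application of one of Meek's rules
R1–R4. -/
def meekStep {V : Type*} (G G' : PDGraph V) : Prop :=
  (∃ a b c, G.A a b ∧ G.E b c ∧ ¬ G.adj a c ∧ orients G G' b c) ∨
  (∃ a b c, G.A a b ∧ G.A b c ∧ G.E a c ∧ orients G G' a c) ∨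
  (∃ a b c d, G.E a b ∧ G.E a d ∧ G.E a c ∧ G.A b c ∧ G.A d c ∧
    b ≠ d ∧ ¬ G.adj b d ∧ orients G G' a c) ∨
  (∃ a b c d, G.E a b ∧ G.E a c ∧ G.E a d ∧ G.A d c ∧ G.A c b ∧
    b ≠ d ∧ ¬ G.adj b d ∧ orients G G' a b)

/-- No Meek rule is applicable in `M`. -/
def meekClosed {V : Type*} (M : PDGraph V) : Prop :=
  (¬ ∃ a b c, M.A a b ∧ M.E b c ∧ ¬ M.adj a c) ∧
  (¬ ∃ a b c, M.A a b ∧ M.A b c ∧ M.E a c) ∧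
  (¬ ∃ a b c d, M.E a b ∧ M.E a d ∧ M.E a c ∧ M.A b c ∧ M.A d c ∧
    b ≠ d ∧ ¬ M.adj b d) ∧
  (¬ ∃ a b c d, M.E a b ∧ M.E a c ∧ M.E a d ∧ M.A d c ∧ M.A c b ∧
    b ≠ d ∧ ¬ M.adj b d)

section Development
variable {V : Type*}

namespace PDGraph

lemma adj_symm {G : PDGraph V} {x y : V} (h : G.adj x y) : G.adj y x := by
  rcases h with h | h | h
  · exact Or.inr (Or.inl h)
  · exact Or.inl h
  · exact Or.inr (Or.inr (G.E_symm _ _ h))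

lemma adj_irrefl (G : PDGraph V) (x : V) : ¬ G.adj x x := by
  rintro (h | h | h)
  · exact G.A_irrefl x h
  · exact G.A_irrefl x h
  · exact G.E_irrefl x h

lemma E_ne {G : PDGraph V} {x y : V} (h : G.E x y) : x ≠ y := by
  rintro rfl; exact G.E_irrefl x h

lemma adj_ne {G : PDGraph V} {x y : V} (h : G.adj x y) : x ≠ y := by
  rintro rfl; exact G.adj_irrefl x h

lemma A_adj {G : PDGraph V} {x y : V} (h : G.A x y) : G.adj x y := Or.inl h
lemma E_adj {G : PDGraph V} {x y : V} (h : G.E x y) : G.adj x y := Or.inr (Or.inr h)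

/-- In a consistent extension, any `M`-adjacent pair is A-related one way. -/
lemma consExt.adj_cases {D M : PDGraph V} (hD : consExt D M) {x y : V}
    (h : M.adj x y) : D.A x y ∨ D.A y x := by
  rcases (hD.2.1 x y).2 h with h' | h' | h'
  · exact Or.inl h'
  · exact Or.inr h'
  · exact absurd h' (hD.1.2 x y)

end PDGraph

lemma orients_adj_iff {G G' : PDGraph V} {p q : V} (ho : orients G G' p q) :
    ∀ x y, G'.adj x y ↔ G.adj x y := by
  obtain ⟨hEpq, hA, hE⟩ := ho
  intro x y
  constructor
  · rintro (h | h | h)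
    · rcases (hA x y).1 h with h' | ⟨rfl, rfl⟩
      · exact Or.inl h'
      · exact PDGraph.E_adj hEpq
    · rcases (hA y x).1 h with h' | ⟨rfl, rfl⟩
      · exact Or.inr (Or.inl h')
      · exact PDGraph.adj_symm (PDGraph.E_adj hEpq)
    · exact PDGraph.E_adj ((hE x y).1 h).1
  · rintro (h | h | h)
    · exact Or.inl ((hA x y).2 (Or.inl h))
    · exact Or.inr (Or.inl ((hA y x).2 (Or.inl h)))
    · by_cases h1 : x = p ∧ y = q
      · exact Or.inl ((hA x y).2 (Or.inr h1))
      · by_cases h2 : x = q ∧ y = p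
        · exact Or.inr (Or.inl ((hA y x).2 (Or.inr ⟨h2.2, h2.1⟩)))
        · exact Or.inr (Or.inr ((hE x y).2 ⟨h, h1, h2⟩))

lemma consExt_orients {D G G' : PDGraph V} {p q : V} (hD : D.consExt G)
    (ho : orients G G' p q) (hpq : D.A p q) : D.consExt G' := by
  obtain ⟨hDAG, hadj, harc, hvs⟩ := hD
  obtain ⟨hEpq, hA, hE⟩ := ho
  refine ⟨hDAG, ?_, ?_, ?_⟩
  · intro x y
    rw [hadj x y]
    exact (orients_adj_iff ⟨hEpq, hA, hE⟩ x y).symm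
  · intro x y h
    rcases (hA x y).1 h with h' | ⟨rfl, rfl⟩
    · exact harc _ _ h'
    · exact hpq
  · intro a m w
    have hadj' := orients_adj_iff ⟨hEpq, hA, hE⟩
    constructor
    · rintro hv
      obtain ⟨h1, h2, h3, h4⟩ := (hvs a m w).1 hv
      exact ⟨(hA a m).2 (Or.inl h1), (hA w m).2 (Or.inl h2), h3, fun hc => h4 ((hadj' a w).1 hc)⟩
    · rintro ⟨h1, h2, h3, h4⟩
      have d1 : D.A a m := by
        rcases (hA a m).1 h1 with h' | ⟨rfl, rfl⟩
        · exact harc _ _ h'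
        · exact hpq
      have d2 : D.A w m := by
        rcases (hA w m).1 h2 with h' | ⟨rfl, rfl⟩
        · exact harc _ _ h'
        · exact hpq
      exact ⟨d1, d2, h3, fun hc => h4 ((hadj' a w).2 ((hadj a w).1 hc))⟩

lemma consExt_meekStep {D G G' : PDGraph V} (hD : D.consExt G) (h : meekStep G G') :
    D.consExt G' := by
  have hDAG := hD.1
  have hadj := hD.2.1
  have harc := hD.2.2.1
  have hvs := hD.2.2.2
  rcases h with ⟨a, b, c, hab, hbc, hnadj, ho⟩ | ⟨a, b, c, hab, hbc, hac, ho⟩ |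
    ⟨a, b, c, d, hEab, hEad, hEac, hAbc, hAdc, hbd, hnadj, ho⟩ |
    ⟨a, b, c, d, hEab, hEac, hEad, hAdc, hAcb, hbd, hnadj, ho⟩
  · -- R1
    refine consExt_orients hD ho ?_
    rcases hD.adj_cases (PDGraph.E_adj hbc) with h' | h'
    · exact h'
    · exfalso
      have hac : a ≠ c := by
        rintro rfl
        exact G.not_both a b hab (G.E_symm _ _ hbc)
      have hv : D.vStructure a b c :=
        ⟨harc _ _ hab, h', hac, fun hc => hnadj ((hadj a c).1 hc)⟩
      have := ((hvs a b c).1 hv).2.1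
      exact G.not_both c b this (G.E_symm _ _ hbc)
  · -- R2
    refine consExt_orients hD ho ?_
    rcases hD.adj_cases (PDGraph.E_adj hac) with h' | h'
    · exact h'
    · exfalso
      refine hDAG.1 a (Relation.TransGen.head (harc _ _ hab) ?_)
      exact Relation.TransGen.head (harc _ _ hbc) (Relation.TransGen.single h')
  · -- R3
    refine consExt_orients hD ho ?_
    rcases hD.adj_cases (PDGraph.E_adj hEac) with h' | h'
    · exact h'
    · exfalso
      have hba : D.A b a := by
        rcases hD.adj_cases (PDGraph.E_adj hEab) with h'' | h''
        · exact absurd (Relation.TransGen.head h'' (Relation.TransGen.head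
            (harc _ _ hAbc) (Relation.TransGen.single h'))) (hDAG.1 a)
        · exact h''
      have hda : D.A d a := by
        rcases hD.adj_cases (PDGraph.E_adj hEad) with h'' | h''
        · exact absurd (Relation.TransGen.head h'' (Relation.TransGen.head
            (harc _ _ hAdc) (Relation.TransGen.single h'))) (hDAG.1 a)
        · exact h''
      have hv : D.vStructure b a d :=
        ⟨hba, hda, hbd, fun hc => hnadj ((hadj b d).1 hc)⟩
      have := ((hvs b a d).1 hv).1
      exact G.not_both b a this (G.E_symm _ _ hEab)
  · -- R4
    refine consExt_orients hD ho ?_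
    rcases hD.adj_cases (PDGraph.E_adj hEab) with h' | h'
    · exact h'
    · exfalso
      have hda : D.A d a := by
        rcases hD.adj_cases (PDGraph.E_adj hEad) with h'' | h''
        · exact absurd (Relation.TransGen.head h'' (Relation.TransGen.head
            (harc _ _ hAdc) (Relation.TransGen.head (harc _ _ hAcb)
              (Relation.TransGen.single h')))) (hDAG.1 a)
        · exact h''
      have hv : D.vStructure b a d :=
        ⟨h', hda, hbd, fun hc => hnadj ((hadj b d).1 hc)⟩
      have := ((hvs b a d).1 hv).1
      exact G.not_both b a this (G.E_symm _ _ hEab)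

lemma consExt_reach {G M : PDGraph V} (hreach : Relation.ReflTransGen meekStep G M)
    {D : PDGraph V} (hD : D.consExt G) : D.consExt M := by
  induction hreach with
  | refl => exact hD
  | tail _ hstep ih => exact consExt_meekStep ih hstep

lemma meekStep_A_mono {G G' : PDGraph V} (h : meekStep G G') {x y : V} (hxy : G.A x y) :
    G'.A x y := by
  rcases h with ⟨a, b, c, _, _, _, ho⟩ | ⟨a, b, c, _, _, _, ho⟩ |
    ⟨a, b, c, d, _, _, _, _, _, _, _, ho⟩ | ⟨a, b, c, d, _, _, _, _, _, _, _, ho⟩ <;>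
    exact (ho.2.1 x y).2 (Or.inl hxy)

lemma reach_A_mono {G M : PDGraph V} (hreach : Relation.ReflTransGen meekStep G M)
    {x y : V} (hxy : G.A x y) : M.A x y := by
  induction hreach with
  | refl => exact hxy
  | tail _ hstep ih => exact meekStep_A_mono hstep ih

/-- Transfer of consistent extension from closure back to the original graph. -/
lemma consExt_back {G M : PDGraph V} (hreach : Relation.ReflTransGen meekStep G M)
    {D₀ : PDGraph V} (hD₀ : D₀.consExt G) {X : PDGraph V} (hX : X.consExt M) :
    X.consExt G := by
  have hadjGM : ∀ x y, M.adj x y ↔ G.adj x y := by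
    clear hX hD₀
    induction hreach with
    | refl => exact fun x y => Iff.rfl
    | tail _ hstep ih =>
      intro x y
      rcases hstep with ⟨a, b, c, _, _, _, ho⟩ | ⟨a, b, c, _, _, _, ho⟩ |
        ⟨a, b, c, d, _, _, _, _, _, _, _, ho⟩ | ⟨a, b, c, d, _, _, _, _, _, _, _, ho⟩ <;>
        exact (orients_adj_iff ho x y).trans (ih x y)
  have hD₀M : D₀.consExt M := consExt_reach hreach hD₀
  refine ⟨hX.1, ?_, ?_, ?_⟩
  · intro x y
    exact (hX.2.1 x y).trans (hadjGM x y)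
  · intro x y h
    exact hX.2.2.1 x y (reach_A_mono hreach h)
  · intro a m w
    exact ((hX.2.2.2 a m w).trans ((hD₀M.2.2.2 a m w).symm.trans (hD₀.2.2.2 a m w)))

end Development
section Induced
variable {V : Type*}

lemma induce_A_iff (M : PDGraph V) (S : Set V) (a b : S) :
    (M.induce S).A a b ↔ M.A (a : V) (b : V) := Iff.rfl

lemma induce_adj_iff (M : PDGraph V) (S : Set V) (a b : S) :
    (M.induce S).adj a b ↔ M.adj (a : V) (b : V) := Iff.rfl

lemma induce_closed {M : PDGraph V} (h : meekClosed M) (S : Set V) :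
    meekClosed (M.induce S) := by
  obtain ⟨h1, h2, h3, h4⟩ := h
  refine ⟨?_, ?_, ?_, ?_⟩
  · rintro ⟨a, b, c, hab, hbc, hn⟩
    exact h1 ⟨a, b, c, hab, hbc, hn⟩
  · rintro ⟨a, b, c, hab, hbc, hac⟩
    exact h2 ⟨a, b, c, hab, hbc, hac⟩
  · rintro ⟨a, b, c, d, e1, e2, e3, a1, a2, hbd, hn⟩
    exact h3 ⟨a, b, c, d, e1, e2, e3, a1, a2, fun hc => hbd (Subtype.ext hc), hn⟩
  · rintro ⟨a, b, c, d, e1, e2, e3, a1, a2, hbd, hn⟩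
    exact h4 ⟨a, b, c, d, e1, e2, e3, a1, a2, fun hc => hbd (Subtype.ext hc), hn⟩

lemma induce_transGen {D : PDGraph V} {S : Set V} {a b : S}
    (h : Relation.TransGen (D.induce S).A a b) : Relation.TransGen D.A (a : V) (b : V) := by
  induction h with
  | single h => exact Relation.TransGen.single h
  | tail _ h2 ih => exact ih.tail h2

lemma induce_consExt {D M : PDGraph V} (hD : D.consExt M) (S : Set V) :
    (D.induce S).consExt (M.induce S) := by
  obtain ⟨⟨hac, hnoE⟩, hadj, harc, hvs⟩ := hD
  refine ⟨⟨?_, ?_⟩, ?_, ?_, ?_⟩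
  · intro a h
    exact hac (a : V) (induce_transGen h)
  · intro a b h
    exact hnoE (a : V) (b : V) h
  · intro a b
    exact hadj (a : V) (b : V)
  · intro a b h
    exact harc (a : V) (b : V) h
  · intro a m w
    constructor
    · rintro ⟨h1, h2, h3, h4⟩
      obtain ⟨g1, g2, g3, g4⟩ := (hvs (a : V) m w).1
        ⟨h1, h2, fun hc => h3 (Subtype.ext hc), h4⟩
      exact ⟨g1, g2, h3, g4⟩
    · rintro ⟨h1, h2, h3, h4⟩
      obtain ⟨g1, g2, g3, g4⟩ := (hvs (a : V) m w).2
        ⟨h1, h2, fun hc => h3 (Subtype.ext hc), h4⟩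
      exact ⟨g1, g2, h3, g4⟩

lemma induce_extendable {M : PDGraph V} (h : M.extendable) (S : Set V) :
    (M.induce S).extendable := by
  obtain ⟨D, hD⟩ := h
  exact ⟨D.induce S, induce_consExt hD S⟩

end Induced

section Sinks
variable {V : Type*}

def isSink (D : PDGraph V) (w : V) : Prop := ∀ x, ¬ D.A w x

lemma sink_potentialSink {D M : PDGraph V} (hD : D.consExt M) {w : V}
    (hw : isSink D w) : M.potentialSink w := by
  constructor
  · intro x hx
    exact hw x (hD.2.2.1 w x hx)
  · intro y hy z hz hzy
    by_contra hnadj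
    have hyw : D.A y w := by
      rcases hD.adj_cases (PDGraph.E_adj hy) with h | h
      · exact h
      · exact absurd h (hw y)
    have hzw : D.A z w := by
      rcases hD.adj_cases hz with h | h
      · exact h
      · exact absurd h (hw z)
    have hyz : y ≠ z := fun hc => hzy hc.symm
    have hv : D.vStructure y w z :=
      ⟨hyw, hzw, hyz, fun hc => hnadj ((hD.2.1 y z).1 hc)⟩
    have := ((hD.2.2.2 y w z).1 hv).1
    exact M.not_both y w this hy

lemma exists_sink_from [Finite V] {D : PDGraph V} (hac : D.acyclic) (v : V) :
    ∃ w, isSink D w ∧ Relation.ReflTransGen D.A v w := by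
  have : IsTrans V (fun a b => Relation.TransGen D.A b a) := ⟨fun a b c h1 h2 => h2.trans h1⟩
  have : IsIrrefl V (fun a b => Relation.TransGen D.A b a) := ⟨fun a h => hac a h⟩
  have wf := Finite.wellFounded_of_trans_of_irrefl (fun a b => Relation.TransGen D.A b a)
  obtain ⟨w, hwS, hmin⟩ := wf.has_min {b | Relation.ReflTransGen D.A v b}
    ⟨v, Relation.ReflTransGen.refl⟩
  refine ⟨w, ?_, hwS⟩
  intro x hx
  exact hmin x (hwS.tail hx) (Relation.TransGen.single hx)

/-- Two distinct adjacent potential sinks are undirected twins. -/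
lemma twin_of_adj {M : PDGraph V} {w t : V} (hw : M.potentialSink w)
    (ht : M.potentialSink t) (hadj : M.adj w t) :
    M.E w t ∧ (∀ z, M.adj z w → z ≠ t → M.adj z t) ∧ (∀ z, M.adj z t → z ≠ w → M.adj z w) := by
  have hE : M.E w t := by
    rcases hadj with h | h | h
    · exact absurd h (hw.1 t)
    · exact absurd h (ht.1 w)
    · exact h
  refine ⟨hE, ?_, ?_⟩
  · intro z hz hzt
    exact PDGraph.adj_symm (hw.2 t (M.E_symm _ _ hE) z hz hzt)
  · intro z hz hzw
    exact PDGraph.adj_symm (ht.2 w hE z hz hzw)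

end Sinks

section Attach
variable {V : Type*}

/-- Attach a potential sink `s` back: all of its edges oriented into it. -/
def attach (M : PDGraph V) (s : V) (D' : PDGraph ({x : V | x ≠ s} : Set V)) : PDGraph V where
  A a b := (∃ (ha : a ≠ s) (hb : b ≠ s), D'.A ⟨a, ha⟩ ⟨b, hb⟩) ∨ (b = s ∧ M.adj a s)
  E _ _ := False
  E_symm := fun _ _ h => h.elim
  A_irrefl := by
    rintro v (⟨ha, hb, h⟩ | ⟨he, h⟩)
    · exact D'.A_irrefl _ h
    · exact M.adj_irrefl v (he ▸ h)
  E_irrefl := fun _ h => h.elim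
  no_two_cycle := by
    rintro a b (⟨ha, hb, h⟩ | ⟨he, h⟩) (⟨hb', ha', h'⟩ | ⟨he', h'⟩)
    · exact D'.no_two_cycle _ _ h h'
    · exact ha (he'.symm ▸ he')
    · exact hb' he
    · exact M.adj_irrefl b (he ▸ h')
  not_both := fun _ _ _ h => h

lemma attach_A_into {M : PDGraph V} {s : V} {D' : PDGraph ({x : V | x ≠ s} : Set V)}
    {x : V} (h : M.adj x s) : (attach M s D').A x s := Or.inr ⟨rfl, h⟩

lemma attach_noOut {M : PDGraph V} {s : V} {D' : PDGraph ({x : V | x ≠ s} : Set V)} :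
    ∀ x, ¬ (attach M s D').A s x := by
  rintro x (⟨ha, hb, h⟩ | ⟨he, h⟩)
  · exact ha rfl
  · exact M.adj_irrefl s h

lemma attach_A_to_s {M : PDGraph V} {s : V} {D' : PDGraph ({x : V | x ≠ s} : Set V)}
    {x : V} (h : (attach M s D').A x s) : M.adj x s := by
  rcases h with ⟨ha, hb, h⟩ | ⟨he, h⟩
  · exact absurd rfl hb
  · exact h

lemma attach_consExt {M : PDGraph V} {s : V} (hPS : M.potentialSink s)
    {D' : PDGraph ({x : V | x ≠ s} : Set V)}
    (hD' : D'.consExt (M.induce {x : V | x ≠ s})) :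
    (attach M s D').consExt M := by
  set D := attach M s D' with hDdef
  have hadjD : ∀ a b, D.adj a b ↔ M.adj a b := by
    intro a b
    constructor
    · rintro (h | h | h)
      · rcases h with ⟨ha, hb, h⟩ | ⟨rfl, h⟩
        · exact (hD'.2.1 _ _).1 (Or.inl h)
        · exact h
      · rcases h with ⟨hb, ha, h⟩ | ⟨rfl, h⟩
        · exact PDGraph.adj_symm ((hD'.2.1 _ _).1 (Or.inl h))
        · exact PDGraph.adj_symm h
      · exact h.elim
    · intro h
      by_cases hb : b = s
      · subst hb; exact Or.inl (Or.inr ⟨rfl, h⟩)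
      · by_cases ha : a = s
        · subst ha
          exact Or.inr (Or.inl (Or.inr ⟨rfl, PDGraph.adj_symm h⟩))
        · have : (M.induce {x : V | x ≠ s}).adj ⟨a, ha⟩ ⟨b, hb⟩ := h
          rcases (hD'.2.1 ⟨a, ha⟩ ⟨b, hb⟩).2 this with h' | h' | h'
          · exact Or.inl (Or.inl ⟨ha, hb, h'⟩)
          · exact Or.inr (Or.inl (Or.inl ⟨hb, ha, h'⟩))
          · exact absurd h' (hD'.1.2 _ _)
  have harcD : ∀ a b, M.A a b → D.A a b := by
    intro a b h
    by_cases hb : b = s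
    · subst hb; exact Or.inr ⟨rfl, PDGraph.A_adj h⟩
    · have ha : a ≠ s := by rintro rfl; exact hPS.1 b h
      exact Or.inl ⟨ha, hb, hD'.2.2.1 ⟨a, ha⟩ ⟨b, hb⟩ h⟩
  have hAs : ∀ x, D.A x s ↔ M.adj x s := fun x => ⟨attach_A_to_s, attach_A_into⟩
  refine ⟨⟨?_, fun _ _ h => h⟩, hadjD, harcD, ?_⟩
  · -- acyclicity
    have lift : ∀ a b, Relation.TransGen D.A a b → ∀ hb : b ≠ s,
        ∃ ha : a ≠ s, Relation.TransGen D'.A ⟨a, ha⟩ ⟨b, hb⟩ := by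
      intro a b h
      induction h with
      | single h =>
        intro hb
        rcases h with ⟨ha, hb', h⟩ | ⟨rfl, h⟩
        · exact ⟨ha, Relation.TransGen.single h⟩
        · exact absurd rfl hb
      | tail h1 h2 ih =>
        intro hb
        rcases h2 with ⟨hc, hb', h2'⟩ | ⟨rfl, h2'⟩
        · obtain ⟨ha, tg⟩ := ih hc
          exact ⟨ha, tg.tail h2'⟩
        · exact absurd rfl hb
    intro a h
    by_cases ha : a = s
    · subst ha
      obtain ⟨c, h1, _⟩ := (Relation.TransGen.head'_iff).mp h
      exact attach_noOut c h1
    · obtain ⟨ha', tg⟩ := lift a a h ha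
      exact hD'.1.1 _ tg
  · -- v-structures
    intro a m w
    by_cases hm : s = m
    · subst hm
      constructor
      · rintro ⟨h1, h2, h3, h4⟩
        have ha : M.adj a s := attach_A_to_s h1
        have hw' : M.adj w s := attach_A_to_s h2
        have hnadj : ¬ M.adj a w := fun hc => h4 ((hadjD a w).2 hc)
        have hAa : M.A a s := by
          rcases ha with h | h | h
          · exact h
          · exact absurd h (hPS.1 a)
          · exact absurd (hPS.2 a h w hw' (fun hc => h3 hc.symm)) hnadj
        have hAw : M.A w s := by
          rcases hw' with h | h | h
          · exact h
          · exact absurd h (hPS.1 w)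
          · exact absurd (PDGraph.adj_symm (hPS.2 w h a ha h3)) hnadj
        exact ⟨hAa, hAw, h3, hnadj⟩
      · rintro ⟨h1, h2, h3, h4⟩
        exact ⟨harcD _ _ h1, harcD _ _ h2, h3, fun hc => h4 ((hadjD a w).1 hc)⟩
    · have hms : m ≠ s := fun hc => hm hc.symm
      constructor
      · rintro ⟨h1, h2, h3, h4⟩
        rcases h1 with ⟨ha, hm', h1'⟩ | ⟨he, _⟩
        · rcases h2 with ⟨hw', hm'', h2'⟩ | ⟨he, _⟩
          · have hv : D'.vStructure ⟨a, ha⟩ ⟨m, hm'⟩ ⟨w, hw'⟩ := by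
              refine ⟨h1', h2', fun hc => h3 (congrArg Subtype.val hc), ?_⟩
              intro hc
              exact h4 ((hadjD a w).2 ((hD'.2.1 _ _).1 hc))
            obtain ⟨g1, g2, _, g4⟩ := (hD'.2.2.2 _ _ _).1 hv
            exact ⟨g1, g2, h3, fun hc => h4 ((hadjD a w).2 hc)⟩
          · exact absurd he hms
        · exact absurd he hms
      · rintro ⟨h1, h2, h3, h4⟩
        have ha : a ≠ s := by rintro rfl; exact hPS.1 m h1
        have hw' : w ≠ s := by rintro rfl; exact hPS.1 m h2
        have hv : (M.induce {x : V | x ≠ s}).vStructure ⟨a, ha⟩ ⟨m, hms⟩ ⟨w, hw'⟩ :=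
          ⟨h1, h2, fun hc => h3 (congrArg Subtype.val hc), h4⟩
        obtain ⟨g1, g2, _, g4⟩ := (hD'.2.2.2 _ _ _).2 hv
        refine ⟨Or.inl ⟨ha, hms, g1⟩, Or.inl ⟨hw', hms, g2⟩, h3, ?_⟩
        intro hc
        exact h4 ((hadjD a w).1 hc)
end Attach
section StarHelpers
variable {V : Type*}

/-- Lift a potential sink of `M - x₀` that is not adjacent to `x₀`. -/
lemma PS_lift_notAdj {M : PDGraph V} {x₀ w : V} (hw : w ≠ x₀)
    (h : (M.induce {x : V | x ≠ x₀}).potentialSink ⟨w, hw⟩)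
    (hnadj : ¬ M.adj w x₀) : M.potentialSink w := by
  constructor
  · intro c hc
    by_cases hcx : c = x₀
    · exact hnadj (hcx ▸ PDGraph.A_adj hc)
    · exact h.1 ⟨c, hcx⟩ hc
  · intro y hy z hz hzy
    have hyx : y ≠ x₀ := by
      rintro rfl; exact hnadj (PDGraph.adj_symm (PDGraph.E_adj hy))
    have hzx : z ≠ x₀ := by
      rintro rfl; exact hnadj (PDGraph.adj_symm hz)
    exact h.2 ⟨y, hyx⟩ hy ⟨z, hzx⟩ hz (fun hc => hzy (congrArg Subtype.val hc))

/-- Lift a potential sink of `M - x₀` that is an undirected twin-like neighbor. -/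
lemma PS_lift_sibling {M : PDGraph V} {x₀ w : V} (hw : w ≠ x₀)
    (h : (M.induce {x : V | x ≠ x₀}).potentialSink ⟨w, hw⟩)
    (hE : M.E w x₀) (hN : ∀ z, M.adj z w → z ≠ x₀ → M.adj x₀ z) : M.potentialSink w := by
  constructor
  · intro c hc
    by_cases hcx : c = x₀
    · exact M.not_both w x₀ (hcx ▸ hc) hE
    · exact h.1 ⟨c, hcx⟩ hc
  · intro y hy z hz hzy
    by_cases hyx : y = x₀
    · subst hyx
      exact hN z hz hzy
    · by_cases hzx : z = x₀
      · subst hzx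
        exact PDGraph.adj_symm (hN y (PDGraph.E_adj hy) hyx)
      · exact h.2 ⟨y, hyx⟩ hy ⟨z, hzx⟩ hz (fun hc => hzy (congrArg Subtype.val hc))

/-- Restriction of a potential sink. -/
lemma PS_restrict {M : PDGraph V} {x₀ w : V} (h : M.potentialSink w) (hw : w ≠ x₀) :
    (M.induce {x : V | x ≠ x₀}).potentialSink ⟨w, hw⟩ := by
  constructor
  · intro c hc
    exact h.1 (c : V) hc
  · intro y hy z hz hzy
    exact h.2 (y : V) hy (z : V) hz (fun hc => hzy (Subtype.ext hc))

/-- The ways a potential sink of `M - x₀` can fail to be a potential sink of `M`. -/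
lemma PS_fail_cases {M : PDGraph V} {x₀ w : V} (hw : w ≠ x₀)
    (h : (M.induce {x : V | x ≠ x₀}).potentialSink ⟨w, hw⟩)
    (hfail : ¬ M.potentialSink w) :
    (M.A w x₀) ∨
    (M.E x₀ w ∧ ∃ z, M.adj z w ∧ z ≠ x₀ ∧ ¬ M.adj x₀ z) ∨
    (∃ y, M.E y w ∧ M.adj x₀ w ∧ y ≠ x₀ ∧ ¬ M.adj y x₀) := by
  by_contra hcon
  push_neg at hcon
  obtain ⟨h1, h2, h3⟩ := hcon
  apply hfail
  constructor
  · intro c hc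
    by_cases hcx : c = x₀
    · exact h1 (hcx ▸ hc)
    · exact h.1 ⟨c, hcx⟩ hc
  · intro y hy z hz hzy
    by_cases hyx : y = x₀
    · subst hyx
      exact h2 hy z hz hzy
    · by_cases hzx : z = x₀
      · subst hzx
        exact h3 y hy hz hyx
      · exact h.2 ⟨y, hyx⟩ hy ⟨z, hzx⟩ hz (fun hc => hzy (congrArg Subtype.val hc))

end StarHelpers
section Star
open PDGraph

theorem star_lemma (n : ℕ) : ∀ (V : Type*) (_ : Fintype V) (M : PDGraph V),
    Fintype.card V ≤ n → meekClosed M → M.extendable →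
    ∀ u v : V, M.potentialSink u → M.E u v → ∃ s, M.potentialSink s ∧ s ≠ u := by
  induction n with
  | zero =>
    intro V instV M hcard _ _ u v _ _
    exfalso
    letI := instV
    have : 0 < Fintype.card V := Fintype.card_pos_iff.mpr ⟨u⟩
    omega
  | succ n ih =>
    intro V instV M hcard hcl hext u v hu huv
    letI := instV
    classical
    by_contra hbadex
    push_neg at hbadex
    have hbad : ∀ s, M.potentialSink s → s = u := hbadex
    have hvu : v ≠ u := fun hc => M.E_irrefl u (hc ▸ huv)
    obtain ⟨D₀, hD₀⟩ := hext
    set Su : Set V := {x : V | x ≠ u} with hSudef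
    set H : PDGraph ↥Su := M.induce Su with hHdef
    have hHcl : meekClosed H := induce_closed hcl Su
    have hcardSu : Fintype.card ↥Su ≤ n := by
      have h1 : Fintype.card ↥Su < Fintype.card V := by
        apply Fintype.card_subtype_lt (p := fun x => x ∈ Su) (x := u)
        simp [hSudef]
      omega
    -- basic facts about u
    have hSib : ∀ s z, M.E s u → M.adj z u → z ≠ s → M.adj s z :=
      fun s z hs hz hzs => hu.2 s hs z hz hzs
    -- every potential sink of H is adjacent to u
    have hWadj : ∀ w : ↥Su, H.potentialSink w → M.adj (w : V) u := by
      intro w hwPS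
      by_contra hnadj
      exact w.2 (hbad _ (PS_lift_notAdj w.2 hwPS hnadj))
    have hChildless : ∀ w : ↥Su, H.potentialSink w → ∀ c, c ≠ u → ¬ M.A (w : V) c :=
      fun w hw c hc => hw.1 ⟨c, hc⟩
    -- classification of potential sinks of H
    have hWty : ∀ w : ↥Su, H.potentialSink w →
        (M.A (w : V) u ∨ (M.E (w : V) u ∧ ∃ y, M.E y (w : V) ∧ y ≠ u ∧ ¬ M.adj y u)) := by
      intro w hwPS
      rcases hWadj w hwPS with hA | hA | hE
      · exact Or.inl hA
      · exact absurd hA (hu.1 (w : V))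
      · right
        refine ⟨hE, ?_⟩
        have hfail : ¬ M.potentialSink (w : V) := fun hc => w.2 (hbad _ hc)
        rcases PS_fail_cases w.2 hwPS hfail with h1 | ⟨_, z, hz, hzu, hnadj⟩ |
          ⟨y, hy, _, hyu, hnadj⟩
        · exact absurd h1 (fun hc => M.not_both _ _ hc hE)
        · have hEzw : M.E z (w : V) := by
            rcases hz with hAzw | hAwz | hEzw
            · exact absurd hAzw (fun hc =>
                hcl.1 ⟨z, (w : V), u, hc, hE, fun hc2 => hnadj (adj_symm hc2)⟩)
            · exact absurd hAwz (hChildless w hwPS z hzu)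
            · exact hEzw
          exact ⟨z, hEzw, hzu, fun hc => hnadj (adj_symm hc)⟩
        · exact ⟨y, hy, hyu, hnadj⟩
    -- undirected edges from siblings of u to parent-type potential sinks
    have hSP : ∀ (s : V) (p : ↥Su), M.E s u → H.potentialSink p → M.A (p : V) u →
        M.E s (p : V) := by
      intro s p hs hpPS hpA
      have hsu : s ≠ u := E_ne hs
      have hsp : s ≠ (p : V) := by rintro rfl; exact M.not_both _ _ hpA hs
      have hadj : M.adj s (p : V) := hSib s (p : V) hs (A_adj hpA) (fun hc => hsp hc.symm)
      rcases hadj with h | h | h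
      · exact absurd h (fun hc => hcl.2.1 ⟨s, (p : V), u, hc, hpA, hs⟩)
      · exact absurd h (hChildless p hpPS s hsu)
      · exact h
    -- potential sinks of H are pairwise adjacent
    have hTwinAdj : ∀ x t : ↥Su, H.potentialSink x → H.potentialSink t → x ≠ t →
        H.adj x t := by
      intro x t hx ht hxt
      have hvalne : (x : V) ≠ (t : V) := fun hc => hxt (Subtype.ext hc)
      rcases hWty x hx with hxA | ⟨hxE, _⟩
      · rcases hWty t ht with htA | ⟨htE, _⟩
        · by_contra hnadj
          have hnadjM : ¬ M.adj (x : V) (t : V) := hnadj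
          exact hcl.2.2.1 ⟨v, (x : V), u, (t : V),
            hSP v x (M.E_symm u v huv) hx hxA, hSP v t (M.E_symm u v huv) ht htA,
            M.E_symm u v huv, hxA, htA, hvalne, hnadjM⟩
        · have : M.adj (t : V) (x : V) :=
            hSib (t : V) (x : V) htE (hWadj x hx) hvalne
          exact adj_symm this
      · exact hSib (x : V) (t : V) hxE (hWadj t ht) (fun hc => hvalne hc.symm)
    -- find a potential sink of H
    obtain ⟨w₀', hw₀sink, _⟩ := exists_sink_from (induce_consExt hD₀ Su).1.1
      (⟨v, hvu⟩ : ↥Su)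
    have hw₀ : H.potentialSink w₀' := sink_potentialSink (induce_consExt hD₀ Su) hw₀sink
    -- singleton case
    by_cases hsing : ∀ t : ↥Su, H.potentialSink t → t = w₀'
    · have hEedge : ∃ y : ↥Su, H.E w₀' y := by
        rcases hWty w₀' hw₀ with hA | ⟨_, y, hyE, hyu, _⟩
        · have hEv : M.E v (w₀' : V) := hSP v w₀' (M.E_symm u v huv) hw₀ hA
          exact ⟨⟨v, hvu⟩, M.E_symm v (w₀' : V) hEv⟩
        · exact ⟨⟨y, hyu⟩, M.E_symm y (w₀' : V) hyE⟩
      obtain ⟨y, hy⟩ := hEedge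
      obtain ⟨s, hsPS, hsne⟩ := ih ↥Su inferInstance H hcardSu hHcl
        ⟨D₀.induce Su, induce_consExt hD₀ Su⟩ w₀' y hw₀ hy
      exact hsne (hsing s hsPS)
    · push_neg at hsing
      obtain ⟨t₀, ht₀PS, ht₀ne⟩ := hsing
      -- choose x (preferring parent-type) and a distinct twin t
      have hmain : ∃ x t : ↥Su, H.potentialSink x ∧ H.potentialSink t ∧ x ≠ t ∧
          (M.A (x : V) u ∨ ∀ w : ↥Su, H.potentialSink w → M.E (w : V) u) := by
        by_cases hP : ∃ p : ↥Su, H.potentialSink p ∧ M.A (p : V) u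
        · obtain ⟨p, hpPS, hpA⟩ := hP
          by_cases hpw : p = w₀'
          · exact ⟨p, t₀, hpPS, ht₀PS, fun hc => ht₀ne (hc.symm.trans hpw ▸ rfl),
              Or.inl hpA⟩
          · exact ⟨p, w₀', hpPS, hw₀, hpw, Or.inl hpA⟩
        · push_neg at hP
          refine ⟨w₀', t₀, hw₀, ht₀PS, fun hc => ht₀ne hc.symm, Or.inr ?_⟩
          intro w hw
          rcases hWty w hw with hA | ⟨hE, _⟩
          · exact absurd hA (hP w hw)
          · exact hE
      obtain ⟨x, t, hxPS, htPS, hxt, hxty⟩ := hmain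
      have hHadjxt : H.adj x t := hTwinAdj x t hxPS htPS hxt
      obtain ⟨htwE, htw1, htw2⟩ := twin_of_adj hxPS htPS hHadjxt
      have htwE' : M.E (x : V) (t : V) := htwE
      have htxne : (t : V) ≠ (x : V) := fun hc => hxt (Subtype.ext hc.symm)
      have hadjxu : M.adj (x : V) u := hWadj x hxPS
      have hadjtu : M.adj (t : V) u := hWadj t htPS
      -- remove x, apply induction hypothesis
      set Sx : Set V := {z : V | z ≠ (x : V)} with hSxdef
      set Mx : PDGraph ↥Sx := M.induce Sx with hMxdef
      have hcardSx : Fintype.card ↥Sx ≤ n := by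
        have h1 : Fintype.card ↥Sx < Fintype.card V := by
          apply Fintype.card_subtype_lt (p := fun z => z ∈ Sx) (x := (x : V))
          simp [hSxdef]
        omega
      have huSx : u ≠ (x : V) := fun hc => x.2 hc.symm
      have hPSuu : Mx.potentialSink ⟨u, huSx⟩ := PS_restrict hu huSx
      have hanchor : ∃ v' : ↥Sx, Mx.E ⟨u, huSx⟩ v' := by
        rcases hxty with hxA | hall
        · have hvx : v ≠ (x : V) := by
            rintro rfl; exact M.not_both _ _ hxA (M.E_symm u _ huv)
          exact ⟨⟨v, hvx⟩, huv⟩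
        · exact ⟨⟨(t : V), htxne⟩, M.E_symm _ _ (hall t htPS)⟩
      obtain ⟨v', hv'⟩ := hanchor
      obtain ⟨s'', hs''PS, hs''ne⟩ := ih ↥Sx inferInstance Mx hcardSx
        (induce_closed hcl Sx) ⟨D₀.induce Sx, induce_consExt hD₀ Sx⟩
        ⟨u, huSx⟩ v' hPSuu hv'
      have hs'u : (s'' : V) ≠ u := fun hc => hs''ne (Subtype.ext hc)
      have hfail : ¬ M.potentialSink (s'' : V) := fun hc => hs'u (hbad _ hc)
      have hGcases := PS_fail_cases s''.2 hs''PS hfail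
      -- W1 / W2 for s''
      have hW : ¬ M.adj (s'' : V) u ∨ (M.E (s'' : V) u ∧
          ∀ z, M.adj z (s'' : V) → z ≠ u → z ≠ (x : V) → M.adj u z) := by
        by_cases hadj : M.adj (s'' : V) u
        · right
          have hEs'u : M.E (s'' : V) u := by
            rcases hadj with h | h | h
            · exact absurd h (hs''PS.1 ⟨u, huSx⟩)
            · exact absurd h (hu.1 (s'' : V))
            · exact h
          refine ⟨hEs'u, ?_⟩
          intro z hz hzu hzx
          exact hs''PS.2 ⟨u, huSx⟩ (M.E_symm _ _ hEs'u) ⟨z, hzx⟩ hz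
            (fun hc => hzu (congrArg Subtype.val hc))
        · exact Or.inl hadj
      have htChildless : ∀ c, c ≠ u → ¬ M.A (t : V) c := hChildless t htPS
      -- s'' ≠ t
      have hs't : (s'' : V) ≠ (t : V) := by
        intro hEq
        rcases hGcases with h1 | ⟨h2, z, hz, hzx, hnadj⟩ | ⟨y, hyE, hadjxs, hyx, hnadj⟩
        · rw [hEq] at h1
          exact htChildless (x : V) (fun hc => huSx hc.symm) h1
        · rw [hEq] at hz
          have hzu : z ≠ u := by rintro rfl; exact hnadj hadjxu
          have hzadj : H.adj ⟨z, hzu⟩ t := hz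
          exact hnadj (adj_symm (htw2 ⟨z, hzu⟩ hzadj
            (fun hc => hzx (congrArg Subtype.val hc))))
        · rw [hEq] at hyE
          have hyu : y ≠ u := by rintro rfl; exact hnadj (adj_symm hadjxu)
          have hyadj : H.adj ⟨y, hyu⟩ t := E_adj hyE
          exact hnadj (htw2 ⟨y, hyu⟩ hyadj (fun hc => hyx (congrArg Subtype.val hc)))
      -- main case analysis
      rcases hGcases with hG1 | ⟨hG2E, z, hz, hzx, hnadj⟩ | ⟨y, hyE, hadjxs, hyx, hnadj⟩
      · -- G1 : M.A s'' x
        rcases hxty with hxA | hall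
        · rcases hW with hW1 | ⟨hWE, hN⟩
          · -- x parent-type, W1
            have hEvx : M.E v (x : V) := hSP v x (M.E_symm u v huv) hxPS hxA
            have hadjs'v : M.adj (s'' : V) v := by
              by_contra hn
              exact hcl.1 ⟨(s'' : V), (x : V), v, hG1, M.E_symm v (x : V) hEvx, hn⟩
            rcases hadjs'v with h | h | h
            · exact hcl.1 ⟨(s'' : V), v, u, h, M.E_symm u v huv, hW1⟩
            · exact hcl.2.1 ⟨v, (s'' : V), (x : V), h, hG1, hEvx⟩
            · exact hcl.2.2.2 ⟨v, u, (x : V), (s'' : V), M.E_symm u v huv, hEvx,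
                M.E_symm _ _ h, hG1, hxA, fun hc => hs'u hc.symm,
                fun hc => hW1 (adj_symm hc)⟩
          · -- x parent-type, W2 : R2
            exact hcl.2.1 ⟨(s'' : V), (x : V), u, hG1, hxA, hWE⟩
        · -- all sinks sibling-type
          have hxE : M.E (x : V) u := hall x hxPS
          rcases hW with hW1 | ⟨hWE, hN⟩
          · exact hcl.1 ⟨(s'' : V), (x : V), u, hG1, hxE, hW1⟩
          · rcases hWty x hxPS with hA | ⟨_, y_x, hyxE, hyxu, hyxnadj⟩
            · exact M.not_both _ _ hA hxE
            · have hnadjs'yx : ¬ M.adj (s'' : V) y_x := by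
                intro hc
                exact hyxnadj (adj_symm (hN y_x (adj_symm hc) hyxu (E_ne hyxE)))
              exact hcl.1 ⟨(s'' : V), (x : V), y_x, hG1, M.E_symm y_x (x : V) hyxE,
                hnadjs'yx⟩
      · -- G2
        have hzu : z ≠ u := by rintro rfl; exact hnadj hadjxu
        have hzt : z ≠ (t : V) := by rintro rfl; exact hnadj (E_adj htwE')
        have hadjts : M.adj (t : V) (s'' : V) := by
          have hx' : H.adj ⟨(s'' : V), hs'u⟩ x := adj_symm (E_adj hG2E)
          exact adj_symm (htw1 ⟨(s'' : V), hs'u⟩ hx'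
            (fun hc => hs't (congrArg Subtype.val hc)))
        have hEts : M.E (t : V) (s'' : V) := by
          rcases hadjts with h | h | h
          · exact absurd h (htChildless (s'' : V) hs'u)
          · exact absurd h (hs''PS.1 ⟨(t : V), htxne⟩)
          · exact h
        have hnadjtz : ¬ M.adj (t : V) z := by
          intro hc
          have hzadj : H.adj ⟨z, hzu⟩ t := adj_symm hc
          exact hnadj (adj_symm (htw2 ⟨z, hzu⟩ hzadj
            (fun hc2 => hzx (congrArg Subtype.val hc2))))
        exact hnadjtz (hs''PS.2 ⟨(t : V), htxne⟩ hEts ⟨z, hzx⟩ hz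
          (fun hc => hzt (congrArg Subtype.val hc)))
      · -- G3
        have hyu : y ≠ u := by rintro rfl; exact hnadj (adj_symm hadjxu)
        have hyt : y ≠ (t : V) := by rintro rfl; exact hnadj (adj_symm (E_adj htwE'))
        have hadjts : M.adj (t : V) (s'' : V) := by
          have hx' : H.adj ⟨(s'' : V), hs'u⟩ x := adj_symm hadjxs
          exact adj_symm (htw1 ⟨(s'' : V), hs'u⟩ hx'
            (fun hc => hs't (congrArg Subtype.val hc)))
        have hnadjyt : ¬ M.adj y (t : V) := by
          intro hc
          have hyadj : H.adj ⟨y, hyu⟩ t := hc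
          exact hnadj (htw2 ⟨y, hyu⟩ hyadj (fun hc2 => hyx (congrArg Subtype.val hc2)))
        exact hnadjyt (hs''PS.2 ⟨y, hyx⟩ hyE ⟨(t : V), htxne⟩ hadjts
          (fun hc => hyt (congrArg Subtype.val hc).symm))
end Star
section FiniteMain
open PDGraph

theorem finite_main (n : ℕ) : ∀ (V : Type*) (_ : Fintype V) (M : PDGraph V),
    Fintype.card V ≤ n → meekClosed M → M.extendable →
    ∀ u v : V, M.E u v → ∃ D : PDGraph V, D.consExt M ∧ D.A u v := by
  induction n with
  | zero =>
    intro V instV M hcard _ _ u v _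
    exfalso
    letI := instV
    have : 0 < Fintype.card V := Fintype.card_pos_iff.mpr ⟨u⟩
    omega
  | succ n ih =>
    intro V instV M hcard hcl hext u v huv
    letI := instV
    classical
    obtain ⟨D₀, hD₀⟩ := hext
    have hPSex : ∃ s, M.potentialSink s ∧ s ≠ u := by
      obtain ⟨w, hwsink, _⟩ := exists_sink_from hD₀.1.1 u
      have hwPS : M.potentialSink w := sink_potentialSink hD₀ hwsink
      by_cases hwu : w = u
      · subst hwu
        exact star_lemma (n+1) V instV M hcard hcl ⟨D₀, hD₀⟩ w v hwPS huv
      · exact ⟨w, hwPS, hwu⟩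
    obtain ⟨s, hsPS, hsu⟩ := hPSex
    by_cases hsv : s = v
    · subst hsv
      have hD' := induce_consExt hD₀ {x : V | x ≠ s}
      exact ⟨attach M s (D₀.induce {x : V | x ≠ s}), attach_consExt hsPS hD',
        attach_A_into (E_adj huv)⟩
    · have hcard' : Fintype.card ↥{x : V | x ≠ s} ≤ n := by
        have h1 : Fintype.card ↥{x : V | x ≠ s} < Fintype.card V := by
          apply Fintype.card_subtype_lt (p := fun z => z ∈ {x : V | x ≠ s}) (x := s)
          simp
        omega
      have husn : u ≠ s := fun hc => hsu hc.symm
      have hvsn : v ≠ s := fun hc => hsv hc.symm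
      obtain ⟨D', hD', hD'A⟩ := ih ↥{x : V | x ≠ s} inferInstance
        (M.induce {x : V | x ≠ s}) hcard' (induce_closed hcl _)
        ⟨D₀.induce _, induce_consExt hD₀ _⟩ ⟨u, husn⟩ ⟨v, hvsn⟩ huv
      exact ⟨attach M s D', attach_consExt hsPS hD', Or.inl ⟨husn, hvsn, hD'A⟩⟩
end FiniteMain
section Compactness
open PDGraph Filter

theorem inf_main {V : Type*} (M : PDGraph V) (hcl : meekClosed M) (hext : M.extendable)
    (u v : V) (huv : M.E u v) : ∃ D : PDGraph V, D.consExt M ∧ D.A u v := by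
  classical
  obtain ⟨D₀, hD₀⟩ := hext
  have hchoice : ∀ S : Finset V, ∃ D : PDGraph ↥(S : Set V),
      D.consExt (M.induce (S : Set V)) ∧
      (∀ (hu : u ∈ (S : Set V)) (hv : v ∈ (S : Set V)), D.A ⟨u, hu⟩ ⟨v, hv⟩) := by
    intro S
    by_cases hS : u ∈ (S : Set V) ∧ v ∈ (S : Set V)
    · obtain ⟨D, hD, hDA⟩ := finite_main (Fintype.card ↥(S : Set V)) ↥(S : Set V)
        inferInstance (M.induce (S : Set V)) le_rfl (induce_closed hcl _)
        ⟨D₀.induce _, induce_consExt hD₀ _⟩ ⟨u, hS.1⟩ ⟨v, hS.2⟩ huv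
      exact ⟨D, hD, fun hu hv => hDA⟩
    · exact ⟨D₀.induce _, induce_consExt hD₀ _, fun hu hv => absurd ⟨hu, hv⟩ hS⟩
  choose ext hext1 hext2 using hchoice
  obtain ⟨F, hF⟩ := Ultrafilter.exists_le (Filter.atTop : Filter (Finset V))
  have hmem : ∀ a : V, ∀ᶠ S : Finset V in (F : Filter (Finset V)), a ∈ S := by
    intro a
    have h1 : {S : Finset V | {a} ⊆ S} ∈ (Filter.atTop : Filter (Finset V)) :=
      Filter.mem_atTop ({a} : Finset V)
    exact Filter.Eventually.mono (hF h1) (fun S hS => hS (Finset.mem_singleton_self a))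
  set DA : V → V → Prop := fun a b =>
    ∀ᶠ S : Finset V in (F : Filter (Finset V)),
      ∃ (ha : a ∈ (S : Set V)) (hb : b ∈ (S : Set V)), (ext S).A ⟨a, ha⟩ ⟨b, hb⟩
    with hDAdef
  -- M-arcs are in DA
  have hA_of : ∀ a b, M.A a b → DA a b := by
    intro a b hab
    refine Filter.Eventually.mono ((hmem a).and (hmem b)) ?_
    rintro S ⟨ha, hb⟩
    exact ⟨ha, hb, (hext1 S).2.2.1 ⟨a, ha⟩ ⟨b, hb⟩ hab⟩
  have hDAadj : ∀ a b, DA a b → M.adj a b := by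
    intro a b h
    obtain ⟨S, ha, hb, hA⟩ := h.exists
    exact (hext1 S).2.1 ⟨a, ha⟩ ⟨b, hb⟩ |>.1 (PDGraph.A_adj hA)
  have hDAirrefl : ∀ a, ¬ DA a a := by
    intro a h
    obtain ⟨S, ha, _, hA⟩ := h.exists
    exact (ext S).A_irrefl _ hA
  have hDAnotwo : ∀ a b, DA a b → ¬ DA b a := by
    intro a b h1 h2
    obtain ⟨S, hS1, hS2⟩ := (h1.and h2).exists
    obtain ⟨ha, hb, hA⟩ := hS1
    obtain ⟨hb', ha', hA'⟩ := hS2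
    exact (ext S).no_two_cycle _ _ hA hA'
  have htrans : ∀ a b, Relation.TransGen DA a b →
      ∀ᶠ S : Finset V in (F : Filter (Finset V)),
        ∃ (ha : a ∈ (S : Set V)) (hb : b ∈ (S : Set V)),
          Relation.TransGen (ext S).A ⟨a, ha⟩ ⟨b, hb⟩ := by
    intro a b h
    induction h with
    | single h =>
      refine Filter.Eventually.mono h ?_
      rintro S ⟨ha, hb, hA⟩
      exact ⟨ha, hb, Relation.TransGen.single hA⟩
    | tail h1 h2 ih =>
      refine Filter.Eventually.mono (ih.and h2) ?_
      rintro S ⟨⟨ha, hc, htg⟩, hc', hb, hA⟩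
      exact ⟨ha, hb, htg.tail hA⟩
  -- the limit graph
  refine ⟨⟨DA, fun _ _ => False, fun _ _ h => h.elim, hDAirrefl, fun _ h => h.elim,
    hDAnotwo, fun _ _ _ h => h⟩, ?_, ?_⟩
  · constructor
    · constructor
      · intro a h
        obtain ⟨S, ha, ha', htg⟩ := (htrans a a h).exists
        exact (hext1 S).1.1 _ htg
      · intro _ _ h
        exact h
    constructor
    · intro a b
      constructor
      · rintro (h | h | h)
        · exact hDAadj a b h
        · exact PDGraph.adj_symm (hDAadj b a h)
        · exact h.elim
      · intro h
        have hev : ∀ᶠ S : Finset V in (F : Filter (Finset V)),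
            (∃ (ha : a ∈ (S : Set V)) (hb : b ∈ (S : Set V)), (ext S).A ⟨a, ha⟩ ⟨b, hb⟩) ∨
            (∃ (hb : b ∈ (S : Set V)) (ha : a ∈ (S : Set V)), (ext S).A ⟨b, hb⟩ ⟨a, ha⟩) := by
          refine Filter.Eventually.mono ((hmem a).and (hmem b)) ?_
          rintro S ⟨ha, hb⟩
          have hsub : (M.induce (S : Set V)).adj ⟨a, ha⟩ ⟨b, hb⟩ := h
          rcases (hext1 S).adj_cases hsub with h' | h'
          · exact Or.inl ⟨ha, hb, h'⟩
          · exact Or.inr ⟨hb, ha, h'⟩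
        rcases (Ultrafilter.eventually_or.mp hev) with h' | h'
        · exact Or.inl h'
        · exact Or.inr (Or.inl h')
    constructor
    · intro a b h
      exact hA_of a b h
    · intro a m w
      constructor
      · rintro ⟨h1, h2, h3, h4⟩
        have hnadjM : ¬ M.adj a w := by
          intro hc
          by_cases hDAaw : DA a w
          · exact h4 (Or.inl hDAaw)
          · by_cases hDAwa : DA w a
            · exact h4 (Or.inr (Or.inl hDAwa))
            · -- M.adj a w but neither direction: impossible by ultrafilter
              have hev : ∀ᶠ S : Finset V in (F : Filter (Finset V)),
                  (∃ (ha : a ∈ (S : Set V)) (hw : w ∈ (S : Set V)),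
                    (ext S).A ⟨a, ha⟩ ⟨w, hw⟩) ∨
                  (∃ (hw : w ∈ (S : Set V)) (ha : a ∈ (S : Set V)),
                    (ext S).A ⟨w, hw⟩ ⟨a, ha⟩) := by
                refine Filter.Eventually.mono ((hmem a).and (hmem w)) ?_
                rintro S ⟨ha, hw⟩
                have hsub : (M.induce (S : Set V)).adj ⟨a, ha⟩ ⟨w, hw⟩ := hc
                rcases (hext1 S).adj_cases hsub with h' | h'
                · exact Or.inl ⟨ha, hw, h'⟩
                · exact Or.inr ⟨hw, ha, h'⟩
              rcases Ultrafilter.eventually_or.mp hev with h' | h'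
              · exact hDAaw h'
              · exact hDAwa h'
        obtain ⟨S, hS1, hS2⟩ := (h1.and h2).exists
        obtain ⟨ha, hm, hA1⟩ := hS1
        obtain ⟨hw, hm', hA2⟩ := hS2
        have hvs : (ext S).vStructure ⟨a, ha⟩ ⟨m, hm⟩ ⟨w, hw⟩ := by
          refine ⟨hA1, hA2, fun hc => h3 (congrArg Subtype.val hc), ?_⟩
          intro hc
          exact hnadjM ((hext1 S).2.1 _ _ |>.1 hc)
        obtain ⟨g1, g2, _, g4⟩ := ((hext1 S).2.2.2 _ _ _).1 hvs
        exact ⟨g1, g2, h3, hnadjM⟩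
      · rintro ⟨h1, h2, h3, h4⟩
        refine ⟨hA_of _ _ h1, hA_of _ _ h2, h3, ?_⟩
        rintro (h | h | h)
        · exact h4 (hDAadj _ _ h)
        · exact h4 (PDGraph.adj_symm (hDAadj _ _ h))
        · exact h.elim
  · -- D.A u v
    refine Filter.Eventually.mono ((hmem u).and (hmem v)) ?_
    rintro S ⟨hu, hv⟩
    exact ⟨hu, hv, hext2 S hu hv⟩
end Compactness
/-- Completeness of the Meek rules: if `u − v` remains undirected in the closure
`M` of `G` under the Meek rules, then there are consistent extensions of `G`
orienting it in either direction. -/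
theorem stmt_19 {V : Type*} (G : PDGraph V) (hG : G.acyclic)
    (hext : G.extendable) (M : PDGraph V)
    (hreach : Relation.ReflTransGen meekStep G M)
    (hclosed : meekClosed M) (u v : V)
    (he : G.E u v) (hMe : M.E u v) :
    (∃ D₁ : PDGraph V, D₁.consExt G ∧ D₁.A u v) ∧
    (∃ D₂ : PDGraph V, D₂.consExt G ∧ D₂.A v u) := by
  obtain ⟨D₀, hD₀⟩ := hext
  have hD₀M : D₀.consExt M := consExt_reach hreach hD₀
  have hMext : M.extendable := ⟨D₀, hD₀M⟩
  constructor
  · obtain ⟨D₁, hD₁, hA⟩ := inf_main M hclosed hMext u v hMe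
    exact ⟨D₁, consExt_back hreach hD₀ hD₁, hA⟩
  · obtain ⟨D₂, hD₂, hA⟩ := inf_main M hclosed hMext v u (M.E_symm u v hMe)
    exact ⟨D₂, consExt_back hreach hD₀ hD₂, hA⟩
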